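/- arXiv:2312.10137 — 5 statements merged into one kernel-verified Lean document; each statement's English description precedes it below -/
import Mathlib

section
/- Let N = (V, E, c) be a balanced directed network with boundary vertices ∂V ⊆ V, let I, J ⊆ ∂V be disjoint, and let K = ∂V ∖ (I ∪ J). Then the following are equivalent: (i) there exists a multi-cycle flow ℭ(I, J) with f_{ℭ(I,J)}(I, I^c) = S(I) and f_{ℭ(I,J)}(I∪J, (I∪J)^c) = S(I∪J) simultaneously; (ii) there exist a multi-cycle flow ℭ(I∪J) with f_{ℭ(I∪J)}(I∪J, (I∪J)^c) = S(I∪J), a multi-cycle flow ℭ(I) with f_{ℭ(I)}(I, I^c) = S(I), and a multi-cycle flow ℭ that is a multi-cycle subflow of both ℭ(I∪J) and ℭ(I), such that in the residual network Res(N, ℭ) no vertex of I is joined to any vertex of K by a path in the underlying undirected graph formed by the edges of strictly positive residual capacity. -/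
open scoped Classical

/-- An edge cycle: a nonempty cyclically ordered sequence of distinct directed
edges (each a source-target pair) with the target of each edge equal to the
source of the next (cyclically). -/
structure EdgeCycle (V : Type*) where
  n : ℕ
  npos : 0 < n
  edge : Fin n → V × V
  inj : Function.Injective edge
  chain : ∀ i : Fin n, (edge i).2 = (edge ⟨(i.val + 1) % n, Nat.mod_lt _ npos⟩).1

/-- Membership of a directed edge in an edge cycle. -/
def EdgeCycle.Mem {V : Type*} (C : EdgeCycle V) (e : V × V) : Prop :=
  ∃ i, C.edge i = e

/-- The cycle visits a vertex of `S`: some edge of the cycle has its target in `S`. -/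
def EdgeCycle.Visits {V : Type*} (C : EdgeCycle V) (S : Finset V) : Prop :=
  ∃ i, (C.edge i).2 ∈ S

/-- A simple cycle flow: an edge cycle together with a nonnegative flux. -/
structure CycleFlow (V : Type*) where
  cyc : EdgeCycle V
  flux : ℝ
  flux_nonneg : 0 ≤ flux

/-- The total load that a finite family of simple cycle flows places on the
directed edge `(u, v)`. -/
noncomputable def edgeLoad {V : Type*} (F : List (CycleFlow V)) (u v : V) : ℝ :=
  (F.map (fun C => if C.cyc.Mem (u, v) then C.flux else 0)).sum

/-- A finite family of simple cycle flows is a multi-cycle flow on the network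
with capacity function `c` if on every edge the total load is at most the capacity. -/
def Feasible {V : Type*} (c : V → V → ℝ) (F : List (CycleFlow V)) : Prop :=
  ∀ u v, edgeLoad F u v ≤ c u v

/-- The flux of a multi-cycle flow between two (disjoint) vertex sets `I` and `J`:
the sum of the fluxes of those simple cycle flows visiting both a vertex of `I`
and a vertex of `J`. -/
noncomputable def mflux {V : Type*} (F : List (CycleFlow V)) (I J : Finset V) : ℝ :=
  (F.map (fun C => if C.cyc.Visits I ∧ C.cyc.Visits J then C.flux else 0)).sum

/-- The cycle-flow entropy of a subset `I` of the boundary vertices `bdry`: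
the maximal flux between `I` and its boundary complement over all
multi-cycle flows. -/
noncomputable def entropy {V : Type*} (c : V → V → ℝ) (bdry I : Finset V) : ℝ :=
  sSup { x | ∃ F : List (CycleFlow V), Feasible c F ∧ mflux F I (bdry \ I) = x }

/-- A network is balanced if at every vertex the total capacity of ingoing edges
equals the total capacity of outgoing edges. -/
def BalancedNet {V : Type*} [Fintype V] (c : V → V → ℝ) : Prop :=
  ∀ v : V, (∑ u, c u v) = ∑ u, c v u

/-- The residual capacity function of a network `c` with respect to a
multi-cycle flow `F`. -/
noncomputable def resid {V : Type*} (c : V → V → ℝ) (F : List (CycleFlow V)) : V → V → ℝ :=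
  fun u v => c u v - edgeLoad F u v

/-- `F'` is a multi-cycle subflow of `F`: same edge cycles, smaller fluxes. -/
def Subflow {V : Type*} (F' F : List (CycleFlow V)) : Prop :=
  List.Forall₂ (fun C' C => C'.cyc = C.cyc ∧ C'.flux ≤ C.flux) F' F

/-- The nesting property: for every pair of disjoint boundary subsets `I`, `J`
there is a single multi-cycle flow simultaneously maximizing the flux through
`I` and through `I ∪ J`. -/
def Nesting {V : Type*} (c : V → V → ℝ) (bdry : Finset V) : Prop :=
  ∀ I J : Finset V, I ⊆ bdry → J ⊆ bdry → Disjoint I J →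
    ∃ F : List (CycleFlow V), Feasible c F ∧
      mflux F I (bdry \ I) = entropy c bdry I ∧
      mflux F (I ∪ J) (bdry \ (I ∪ J)) = entropy c bdry (I ∪ J)


/-!
(i) ⇒ (ii): the residual network of a multi-cycle flow on a balanced network is again balanced,
so each of its positive edges lies on a positive cycle. Pushing the bottleneck capacity around
such cycles never decreases a flux, so a simultaneous maximiser can be enlarged until no residual
capacity is left; the enlarged flow then serves as all three flows.

(ii) ⇒ (i): let `A` be the component of `I` in the residual network of `ℭ`. On a cycle where
`ℭ(I)` or `ℭ(I ∪ J)` carries more than `ℭ`, every edge has positive residual capacity, so such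
a cycle either stays in `A` or avoids it. Hence running `ℭ(I)` on the cycles that meet `A` and
`ℭ(I ∪ J)` on the others is feasible; it keeps the flux through `I`, since every cycle visiting
`I` meets `A`, and the flux through `I ∪ J`, since on a cycle that meets `A` and visits
`K ⊆ Aᶜ` both flows carry the flux of `ℭ`.
-/

section

variable {V : Type*}

namespace CycleFlow

noncomputable def load (C : CycleFlow V) (u v : V) : ℝ :=
  if C.cyc.Mem (u, v) then C.flux else 0

noncomputable def fluxBetween (C : CycleFlow V) (I J : Finset V) : ℝ :=
  if C.cyc.Visits I ∧ C.cyc.Visits J then C.flux else 0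

lemma load_nonneg (C : CycleFlow V) (u v : V) : 0 ≤ C.load u v := by
  unfold load; split_ifs <;> simp [C.flux_nonneg]

lemma load_le_load {C₀ C : CycleFlow V} (hcyc : C₀.cyc = C.cyc) (hflux : C₀.flux ≤ C.flux)
    (u v : V) : C₀.load u v ≤ C.load u v := by
  unfold load
  rw [hcyc]
  split_ifs
  exacts [hflux, le_rfl]

lemma fluxBetween_nonneg (C : CycleFlow V) (I J : Finset V) : 0 ≤ C.fluxBetween I J := by
  unfold fluxBetween; split_ifs <;> simp [C.flux_nonneg]

lemma fluxBetween_le_flux (C : CycleFlow V) (I J : Finset V) : C.fluxBetween I J ≤ C.flux := by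
  unfold fluxBetween; split_ifs <;> simp [C.flux_nonneg]

end CycleFlow

lemma edgeLoad_eq_sum_load (F : List (CycleFlow V)) (u v : V) :
    edgeLoad F u v = (F.map (·.load u v)).sum := rfl

lemma mflux_eq_sum_fluxBetween (F : List (CycleFlow V)) (I J : Finset V) :
    mflux F I J = (F.map (·.fluxBetween I J)).sum := rfl

@[simp] lemma edgeLoad_nil (u v : V) : edgeLoad [] u v = 0 := rfl

@[simp] lemma edgeLoad_cons (C : CycleFlow V) (F : List (CycleFlow V)) (u v : V) :
    edgeLoad (C :: F) u v = C.load u v + edgeLoad F u v := List.sum_cons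

@[simp] lemma edgeLoad_append (F G : List (CycleFlow V)) (u v : V) :
    edgeLoad (F ++ G) u v = edgeLoad F u v + edgeLoad G u v := by
  simp [edgeLoad_eq_sum_load]

@[simp] lemma mflux_nil (I J : Finset V) : mflux [] I J = 0 := rfl

@[simp] lemma mflux_cons (C : CycleFlow V) (F : List (CycleFlow V)) (I J : Finset V) :
    mflux (C :: F) I J = C.fluxBetween I J + mflux F I J := List.sum_cons

@[simp] lemma mflux_append (F G : List (CycleFlow V)) (I J : Finset V) :
    mflux (F ++ G) I J = mflux F I J + mflux G I J := by
  simp [mflux_eq_sum_fluxBetween]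

lemma mflux_nonneg (F : List (CycleFlow V)) (I J : Finset V) : 0 ≤ mflux F I J :=
  List.sum_nonneg (by simpa using fun C _ => C.fluxBetween_nonneg I J)

namespace EdgeCycle

lemma Visits.of_mem {C : EdgeCycle V} {A : Finset V} {u v : V} (h : C.Mem (u, v))
    (hv : v ∈ A) : C.Visits A :=
  let ⟨i, hi⟩ := h; ⟨i, hi ▸ hv⟩

lemma Visits.mono {C : EdgeCycle V} {I A : Finset V} (h : C.Visits I) (hIA : I ⊆ A) :
    C.Visits A :=
  let ⟨i, hi⟩ := h; ⟨i, hIA hi⟩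

variable (C : EdgeCycle V)

def next (i : Fin C.n) : Fin C.n := ⟨(i.val + 1) % C.n, Nat.mod_lt _ C.npos⟩

lemma snd_edge_eq_fst_edge_next (i : Fin C.n) : (C.edge i).2 = (C.edge (C.next i)).1 :=
  C.chain i

lemma next_bijective : Function.Bijective C.next := by
  refine Finite.injective_iff_bijective.1 fun i j h => Fin.ext ?_
  have h' : i.val + 1 ≡ j.val + 1 [MOD C.n] := congrArg Fin.val h
  simpa [Nat.ModEq, Nat.mod_eq_of_lt i.isLt, Nat.mod_eq_of_lt j.isLt] using
    Nat.ModEq.add_right_cancel' 1 h'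

lemma sum_snd_edge_eq_sum_fst_edge {M : Type*} [AddCommMonoid M] (f : V → M) :
    ∑ i, f (C.edge i).2 = ∑ i, f (C.edge i).1 := by
  simp_rw [C.snd_edge_eq_fst_edge_next]
  exact C.next_bijective.sum_comp fun i => f (C.edge i).1

lemma ite_mem_eq_sum {M : Type*} [AddCommMonoid M] (p : V × V) (x : M) :
    (if C.Mem p then x else 0) = ∑ i, if C.edge i = p then x else 0 := by
  split_ifs with h
  · obtain ⟨i, rfl⟩ := h
    simp [C.inj.eq_iff]
  · exact (Finset.sum_eq_zero fun i _ => if_neg fun hi => h ⟨i, hi⟩).symm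

lemma sum_ite_mem_in_eq_out [Fintype V] {M : Type*} [AddCommMonoid M] (x : M) (v : V) :
    ∑ u, (if C.Mem (u, v) then x else 0) = ∑ u, if C.Mem (v, u) then x else 0 := by
  simp_rw [C.ite_mem_eq_sum]
  rw [Finset.sum_comm, Finset.sum_comm (γ := V)]
  simp only [Prod.ext_iff, ite_and, Finset.sum_ite_eq, Finset.mem_univ,
    if_true, Finset.sum_ite_irrel, Finset.sum_const_zero]
  exact C.sum_snd_edge_eq_sum_fst_edge fun w => if w = v then x else 0

lemma next_iterate_val (i : Fin C.n) (k : ℕ) : (C.next^[k] i).val = (i.val + k) % C.n := by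
  induction k with
  | zero => simp [Nat.mod_eq_of_lt i.isLt]
  | succ k ih =>
    rw [Function.iterate_succ_apply']
    change ((C.next^[k] i).val + 1) % C.n = _
    rw [ih, ← add_assoc]
    exact Nat.mod_modEq _ _ |>.add_right 1

lemma exists_next_iterate_eq (i j : Fin C.n) : ∃ k, C.next^[k] i = j := by
  refine ⟨C.n - i.val + j.val, Fin.ext ?_⟩
  rw [next_iterate_val, show i.val + (C.n - i.val + j.val) = C.n + j.val by omega,
    Nat.add_mod_left, Nat.mod_eq_of_lt j.isLt]

lemma forall_snd_edge_mem_of_visits {A : Finset V}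
    (hA : ∀ i, (C.edge i).1 ∈ A → (C.edge i).2 ∈ A) (hvis : C.Visits A) :
    ∀ i, (C.edge i).2 ∈ A := by
  obtain ⟨i₀, hi₀⟩ := hvis
  have hiter : ∀ k, (C.edge (C.next^[k] i₀)).2 ∈ A := by
    intro k
    induction k with
    | zero => exact hi₀
    | succ k ih =>
      rw [Function.iterate_succ_apply']
      exact hA _ (C.snd_edge_eq_fst_edge_next _ ▸ ih)
  intro j
  obtain ⟨k, rfl⟩ := C.exists_next_iterate_eq i₀ j
  exact hiter k

def ofNodup (l : List V) (hl : l ≠ []) (hnd : l.Nodup) : EdgeCycle V where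
  n := l.length
  npos := List.length_pos_iff.2 hl
  edge i := (l[i], l[(i.val + 1) % l.length]'(Nat.mod_lt _ (List.length_pos_iff.2 hl)))
  inj i j h := Fin.ext (hnd.getElem_inj_iff.1 (congrArg Prod.fst h))
  chain _ := rfl

end EdgeCycle

lemma Relation.ReflTransGen.exists_isChain_nodup {α : Type*} {r : α → α → Prop} {a b : α}
    (h : Relation.ReflTransGen r a b) :
    ∃ l, List.IsChain r (a :: l) ∧ (a :: l).getLast (List.cons_ne_nil _ _) = b ∧
      (a :: l).Nodup := by
  induction h using Relation.ReflTransGen.head_induction_on with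
  | refl => exact ⟨[], .singleton _, rfl, List.nodup_singleton _⟩
  | @head a d had _ ih =>
    obtain ⟨l, hchain, hlast, hnd⟩ := ih
    by_cases ha : a ∈ d :: l
    · -- shortcut the loop through `a`
      obtain ⟨s, t, hst⟩ := List.append_of_mem ha
      refine ⟨t, ?_, ?_, ?_⟩
      · exact hchain.suffix ⟨s, hst.symm⟩
      · rw [← hlast]; simp [hst]
      · exact hnd.sublist (hst ▸ List.sublist_append_right s (a :: t))
    · exact ⟨d :: l, .cons_cons had hchain, by rw [List.getLast_cons_cons, hlast],
        List.nodup_cons.2 ⟨ha, hnd⟩⟩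

section Network

variable [Fintype V] {c : V → V → ℝ}

lemma BalancedNet.sum_cut_in_eq_out (hbal : BalancedNet c) (S : Finset V) :
    ∑ w ∈ S, ∑ x ∈ Sᶜ, c x w = ∑ w ∈ S, ∑ x ∈ Sᶜ, c w x := by
  have hS : ∑ w ∈ S, (∑ x ∈ S, c x w + ∑ x ∈ Sᶜ, c x w)
      = ∑ w ∈ S, (∑ x ∈ S, c w x + ∑ x ∈ Sᶜ, c w x) := by
    simp_rw [Finset.sum_add_sum_compl]
    exact Finset.sum_congr rfl fun w _ => hbal w
  rw [Finset.sum_add_distrib, Finset.sum_add_distrib, Finset.sum_comm] at hS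
  exact add_left_cancel hS

lemma BalancedNet.reflTransGen_of_pos (hc : ∀ u v, 0 ≤ c u v) (hbal : BalancedNet c)
    {u v : V} (huv : 0 < c u v) : Relation.ReflTransGen (fun x y => 0 < c x y) v u := by
  by_contra hvu
  set S := Finset.univ.filter fun w => Relation.ReflTransGen (fun x y => 0 < c x y) v w
  have hv : v ∈ S := Finset.mem_filter.2 ⟨Finset.mem_univ _, .refl⟩
  have hu : u ∈ Sᶜ := by simpa [S] using hvu
  -- nothing leaves the reachable set `S`, so by conservation nothing enters it either
  have hout : ∑ w ∈ S, ∑ x ∈ Sᶜ, c w x = 0 := by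
    refine Finset.sum_eq_zero fun w hw => Finset.sum_eq_zero fun x hx => ?_
    refine ((hc w x).eq_or_lt.resolve_right fun hwx => ?_).symm
    simp only [S, Finset.mem_compl, Finset.mem_filter, Finset.mem_univ, true_and] at hw hx
    exact hx (hw.tail hwx)
  rw [← hbal.sum_cut_in_eq_out, Finset.sum_eq_zero_iff_of_nonneg
    fun w _ => Finset.sum_nonneg fun x _ => hc x w] at hout
  have := (Finset.sum_eq_zero_iff_of_nonneg fun x _ => hc x v).1 (hout v hv) u hu
  exact huv.ne' this

lemma exists_edgeCycle_pos_of_pos (hc : ∀ u v, 0 ≤ c u v) (hbal : BalancedNet c)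
    {u v : V} (huv : 0 < c u v) :
    ∃ C : EdgeCycle V, C.Mem (u, v) ∧ ∀ i, 0 < c (C.edge i).1 (C.edge i).2 := by
  obtain ⟨l, hchain, hlast, hnd⟩ := (hbal.reflTransGen_of_pos hc huv).exists_isChain_nodup
  rw [List.getLast_eq_getElem] at hlast
  simp only [List.length_cons, add_tsub_cancel_right] at hlast
  refine ⟨.ofNodup (v :: l) (List.cons_ne_nil _ _) hnd,
    ⟨⟨l.length, l.length.lt_succ_self⟩, ?_⟩, ?_⟩
  · simpa [EdgeCycle.ofNodup] using hlast
  · rintro ⟨i, hi⟩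
    change i < l.length + 1 at hi
    rcases Nat.lt_or_ge (i + 1) (l.length + 1) with hlt | hge
    · have hmod : (i + 1) % (v :: l).length = i + 1 := Nat.mod_eq_of_lt hlt
      simp only [EdgeCycle.ofNodup, Fin.getElem_fin, hmod]
      exact List.isChain_iff_getElem.1 hchain i hlt
    · obtain rfl : i = l.length := by omega
      simpa [EdgeCycle.ofNodup, hlast] using huv

end Network

section Residual

variable {c : V → V → ℝ}

lemma resid_nonneg {F : List (CycleFlow V)} (hF : Feasible c F) (u v : V) :
    0 ≤ resid c F u v :=
  sub_nonneg.2 (hF u v)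

lemma resid_append_singleton (F : List (CycleFlow V)) (D : CycleFlow V) (u v : V) :
    resid c (F ++ [D]) u v = resid c F u v - D.load u v := by
  simp [resid, sub_sub]

variable [Fintype V]

lemma sum_edgeLoad_in_eq_out (F : List (CycleFlow V)) (v : V) :
    ∑ u, edgeLoad F u v = ∑ u, edgeLoad F v u := by
  induction F with
  | nil => simp
  | cons C F ih =>
    simp only [edgeLoad_cons, Finset.sum_add_distrib, ih, CycleFlow.load,
      C.cyc.sum_ite_mem_in_eq_out]

lemma BalancedNet.resid (hbal : BalancedNet c) (F : List (CycleFlow V)) :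
    BalancedNet (resid c F) := by
  intro v
  simp only [_root_.resid, Finset.sum_sub_distrib, hbal v, sum_edgeLoad_in_eq_out]

noncomputable def residSupport (c : V → V → ℝ) (F : List (CycleFlow V)) : Finset (V × V) :=
  Finset.univ.filter fun p => 0 < resid c F p.1 p.2

lemma exists_feasible_residSupport_ssubset (hbal : BalancedNet c)
    {F : List (CycleFlow V)} (hF : Feasible c F) {u v : V} (huv : 0 < resid c F u v) :
    ∃ D : CycleFlow V, Feasible c (F ++ [D]) ∧ residSupport c (F ++ [D]) ⊂ residSupport c F := by
  obtain ⟨C, -, hpos⟩ := exists_edgeCycle_pos_of_pos (resid_nonneg hF) (hbal.resid F) huv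
  -- push the bottleneck residual capacity of `C` around `C`
  obtain ⟨i₀, -, hmin⟩ := Finset.univ.exists_min_image
    (fun i => resid c F (C.edge i).1 (C.edge i).2) ⟨⟨0, C.npos⟩, Finset.mem_univ _⟩
  set D : CycleFlow V := ⟨C, _, (hpos i₀).le⟩
  have hload_le : ∀ x y, D.load x y ≤ resid c F x y := by
    intro x y
    by_cases hxy : C.Mem (x, y)
    · obtain ⟨i, hi⟩ := hxy
      rw [CycleFlow.load, if_pos ⟨i, hi⟩]
      simpa [hi] using hmin i (Finset.mem_univ _)
    · simpa [D, CycleFlow.load, hxy] using resid_nonneg hF x y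
  refine ⟨D, fun x y => ?_, ?_, fun hsub => ?_⟩
  · have := hload_le x y
    rw [resid] at this
    rw [edgeLoad_append, edgeLoad_cons, edgeLoad_nil, add_zero]
    linarith
  · intro p hp
    simp only [residSupport, Finset.mem_filter, Finset.mem_univ, true_and,
      resid_append_singleton] at hp ⊢
    linarith [D.load_nonneg p.1 p.2]
  · have hmem := hsub (Finset.mem_filter.2 ⟨Finset.mem_univ _, hpos i₀⟩)
    simp [residSupport, resid_append_singleton, D, CycleFlow.load, EdgeCycle.Mem] at hmem

lemma exists_feasible_append_resid_eq_zero (hbal : BalancedNet c)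
    {F : List (CycleFlow V)} (hF : Feasible c F) :
    ∃ G : List (CycleFlow V), Feasible c (F ++ G) ∧ ∀ u v, resid c (F ++ G) u v = 0 := by
  induction hn : (residSupport c F).card using Nat.strong_induction_on generalizing F with
  | _ n ih =>
    by_cases hsat : ∀ u v, resid c F u v = 0
    · exact ⟨[], by simpa using hF, by simpa using hsat⟩
    obtain ⟨u, v, huv⟩ : ∃ u v, resid c F u v ≠ 0 := by simpa using hsat
    obtain ⟨D, hD, hlt⟩ := exists_feasible_residSupport_ssubset hbal hF
      ((resid_nonneg hF u v).lt_of_ne' huv)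
    obtain ⟨G, hG, hGsat⟩ := ih _ (hn ▸ Finset.card_lt_card hlt) hD rfl
    exact ⟨D :: G, by simpa using hG, by simpa using hGsat⟩

end Residual

section Entropy

variable [Fintype V] {c : V → V → ℝ}

lemma CycleFlow.flux_le_sum_load (C : CycleFlow V) : C.flux ≤ ∑ p : V × V, C.load p.1 p.2 := by
  have hmem : C.cyc.Mem (C.cyc.edge ⟨0, C.cyc.npos⟩) := ⟨_, rfl⟩
  calc C.flux = C.load (C.cyc.edge ⟨0, C.cyc.npos⟩).1 (C.cyc.edge ⟨0, C.cyc.npos⟩).2 := by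
        simp [CycleFlow.load, hmem]
    _ ≤ ∑ p : V × V, C.load p.1 p.2 :=
        Finset.single_le_sum (fun (p : V × V) _ => C.load_nonneg p.1 p.2) (Finset.mem_univ _)

lemma mflux_le_sum_edgeLoad (F : List (CycleFlow V)) (I J : Finset V) :
    mflux F I J ≤ ∑ p : V × V, edgeLoad F p.1 p.2 := by
  induction F with
  | nil => simp
  | cons C F ih =>
    simp only [mflux_cons, edgeLoad_cons, Finset.sum_add_distrib]
    linarith [C.fluxBetween_le_flux I J, C.flux_le_sum_load]

lemma mflux_le_entropy {F : List (CycleFlow V)} (hF : Feasible c F) (bdry I : Finset V) :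
    mflux F I (bdry \ I) ≤ entropy c bdry I := by
  refine le_csSup ⟨∑ p : V × V, c p.1 p.2, ?_⟩ ⟨F, hF, rfl⟩
  rintro _ ⟨G, hG, rfl⟩
  exact (mflux_le_sum_edgeLoad G _ _).trans (Finset.sum_le_sum fun p _ => hG p.1 p.2)

lemma mflux_append_eq_entropy {F G : List (CycleFlow V)} (hFG : Feasible c (F ++ G))
    {bdry I : Finset V} (hF : mflux F I (bdry \ I) = entropy c bdry I) :
    mflux (F ++ G) I (bdry \ I) = entropy c bdry I := by
  refine (mflux_le_entropy hFG bdry I).antisymm ?_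
  rw [mflux_append, ← hF]
  linarith [mflux_nonneg G I (bdry \ I)]

end Entropy

section Splice

variable (A : Finset V)

noncomputable def splice (p : CycleFlow V × CycleFlow V) : CycleFlow V :=
  if p.1.cyc.Visits A then p.1 else p.2

def Spliceable (p : CycleFlow V × CycleFlow V) : Prop :=
  p.1.cyc = p.2.cyc ∧ (p.1.cyc.Visits A → p.1.flux = p.2.flux ∨ ∀ i, (p.1.cyc.edge i).2 ∈ A)

variable {A} {p : CycleFlow V × CycleFlow V}

lemma Spliceable.load_splice_le_fst (hp : Spliceable A p) {u v : V} (hv : v ∈ A) :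
    (splice A p).load u v ≤ p.1.load u v := by
  by_cases huv : p.1.cyc.Mem (u, v)
  · rw [splice, if_pos (.of_mem huv hv)]
  · rw [splice]
    split_ifs <;> simp [CycleFlow.load, ← hp.1, huv]

lemma Spliceable.load_splice_le_snd (hp : Spliceable A p) {u v : V} (hv : v ∉ A) :
    (splice A p).load u v ≤ p.2.load u v := by
  rw [splice]
  split_ifs with hvis
  · by_cases huv : p.1.cyc.Mem (u, v)
    · rcases hp.2 hvis with heq | hin
      · simp [CycleFlow.load, ← hp.1, huv, heq]
      · obtain ⟨i, hi⟩ := huv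
        exact absurd (by simpa [hi] using hin i) hv
    · simp [CycleFlow.load, ← hp.1, huv]
  · exact le_rfl

lemma Spliceable.fluxBetween_splice_of_subset (hp : Spliceable A p) {I : Finset V} (hIA : I ⊆ A)
    (J : Finset V) : (splice A p).fluxBetween I J = p.1.fluxBetween I J := by
  rw [splice]
  split_ifs with hvis
  · rfl
  · have hI : ¬ p.1.cyc.Visits I := fun h => hvis (h.mono hIA)
    simp [CycleFlow.fluxBetween, ← hp.1, hI]

lemma Spliceable.fluxBetween_splice_of_disjoint (hp : Spliceable A p) {K : Finset V}
    (hKA : Disjoint K A) (X : Finset V) :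
    (splice A p).fluxBetween X K = p.2.fluxBetween X K := by
  rw [splice]
  split_ifs with hvis
  · by_cases hK : p.1.cyc.Visits K
    · rcases hp.2 hvis with heq | hin
      · simp [CycleFlow.fluxBetween, ← hp.1, heq]
      · obtain ⟨i, hi⟩ := hK
        exact absurd (hin i) (Finset.disjoint_left.1 hKA hi)
    · simp [CycleFlow.fluxBetween, ← hp.1, hK]
  · rfl

variable {L : List (CycleFlow V × CycleFlow V)}

lemma feasible_map_splice (hL : ∀ p ∈ L, Spliceable A p) {c : V → V → ℝ}
    (h₁ : Feasible c (L.map Prod.fst)) (h₂ : Feasible c (L.map Prod.snd)) :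
    Feasible c (L.map (splice A)) := by
  intro u v
  simp only [Feasible, edgeLoad_eq_sum_load, List.map_map] at h₁ h₂ ⊢
  by_cases hv : v ∈ A
  · exact (List.sum_le_sum fun p hp => (hL p hp).load_splice_le_fst hv).trans (h₁ u v)
  · exact (List.sum_le_sum fun p hp => (hL p hp).load_splice_le_snd hv).trans (h₂ u v)

lemma mflux_map_splice_of_subset (hL : ∀ p ∈ L, Spliceable A p) {I : Finset V} (hIA : I ⊆ A)
    (J : Finset V) :
    mflux (L.map (splice A)) I J = mflux (L.map Prod.fst) I J := by
  simp only [mflux_eq_sum_fluxBetween, List.map_map]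
  exact congrArg List.sum
    (List.map_congr_left fun p hp => (hL p hp).fluxBetween_splice_of_subset hIA J)

lemma mflux_map_splice_of_disjoint (hL : ∀ p ∈ L, Spliceable A p) {K : Finset V}
    (hKA : Disjoint K A) (X : Finset V) :
    mflux (L.map (splice A)) X K = mflux (L.map Prod.snd) X K := by
  simp only [mflux_eq_sum_fluxBetween, List.map_map]
  exact congrArg List.sum
    (List.map_congr_left fun p hp => (hL p hp).fluxBetween_splice_of_disjoint hKA X)

end Splice

lemma List.exists_mem_zip_of_mem_zip {α β γ : Type*} {l : List α} {l₁ : List β} {l₂ : List γ}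
    (h₁ : l.length = l₁.length) (h₂ : l.length = l₂.length) {b : β} {c : γ}
    (h : (b, c) ∈ l₁.zip l₂) : ∃ a, (a, b) ∈ l.zip l₁ ∧ (a, c) ∈ l.zip l₂ := by
  obtain ⟨i, hi, hbc⟩ := List.mem_iff_getElem.1 h
  rw [List.getElem_zip, Prod.mk.injEq] at hbc
  rw [List.length_zip] at hi
  refine ⟨l[i]'(by omega), List.mem_iff_getElem.2 ⟨i, ?_, ?_⟩, List.mem_iff_getElem.2 ⟨i, ?_, ?_⟩⟩
  · rw [List.length_zip]; omega
  · simp [hbc.1]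
  · rw [List.length_zip]; omega
  · simp [hbc.2]

section Subflow

variable {c : V → V → ℝ} {F₀ G : List (CycleFlow V)}

lemma Subflow.edgeLoad_le (h : Subflow F₀ G) (u v : V) : edgeLoad F₀ u v ≤ edgeLoad G u v := by
  induction h with
  | nil => simp
  | cons hC _ ih =>
    simpa only [edgeLoad_cons] using add_le_add (CycleFlow.load_le_load hC.1 hC.2 u v) ih

lemma Subflow.flux_sub_le_edgeLoad_sub (h : Subflow F₀ G) {C₀ C : CycleFlow V}
    (hmem : (C₀, C) ∈ F₀.zip G) {u v : V} (huv : C.cyc.Mem (u, v)) :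
    C.flux - C₀.flux ≤ edgeLoad G u v - edgeLoad F₀ u v := by
  induction h with
  | nil => simp at hmem
  | cons hC htl ih =>
    simp only [List.zip_cons_cons, List.mem_cons, Prod.mk.injEq] at hmem
    simp only [edgeLoad_cons]
    rcases hmem with ⟨rfl, rfl⟩ | hmem
    · have := Subflow.edgeLoad_le htl u v
      have hmem₀ : C₀.cyc.Mem (u, v) := hC.1 ▸ huv
      simp only [CycleFlow.load, if_pos huv, if_pos hmem₀]
      linarith
    · linarith [ih hmem, CycleFlow.load_le_load hC.1 hC.2 u v]

lemma Subflow.forall_snd_edge_mem_of_flux_lt (h : Subflow F₀ G) (hG : Feasible c G)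
    {A : Finset V} (hA : ∀ x y, x ∈ A → 0 < resid c F₀ x y → y ∈ A) {C₀ C : CycleFlow V}
    (hmem : (C₀, C) ∈ F₀.zip G) (hlt : C₀.flux < C.flux) (hvis : C.cyc.Visits A) :
    ∀ i, (C.cyc.edge i).2 ∈ A := by
  refine C.cyc.forall_snd_edge_mem_of_visits (fun i hi => hA _ _ hi ?_) hvis
  have := h.flux_sub_le_edgeLoad_sub hmem ⟨i, rfl⟩
  have := hG (C.cyc.edge i).1 (C.cyc.edge i).2
  rw [resid]
  linarith

lemma spliceable_of_subflow {G₁ G₂ : List (CycleFlow V)} {A : Finset V}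
    (hA : ∀ x y, x ∈ A → 0 < resid c F₀ x y → y ∈ A) (h₁ : Subflow F₀ G₁) (h₂ : Subflow F₀ G₂)
    (hG₁ : Feasible c G₁) (hG₂ : Feasible c G₂) : ∀ p ∈ G₁.zip G₂, Spliceable A p := by
  rintro ⟨C₁, C₂⟩ hp
  obtain ⟨C₀, hC₁, hC₂⟩ := List.exists_mem_zip_of_mem_zip h₁.length_eq h₂.length_eq hp
  obtain ⟨hcyc₁, hle₁⟩ := List.forall₂_zip h₁ hC₁
  obtain ⟨hcyc₂, hle₂⟩ := List.forall₂_zip h₂ hC₂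
  have hcyc : C₁.cyc = C₂.cyc := hcyc₁.symm.trans hcyc₂
  refine ⟨hcyc, fun hvis => ?_⟩
  rcases hle₁.lt_or_eq with hlt₁ | heq₁
  · exact .inr (h₁.forall_snd_edge_mem_of_flux_lt hG₁ hA hC₁ hlt₁ hvis)
  rcases hle₂.lt_or_eq with hlt₂ | heq₂
  · rw [hcyc] at hvis ⊢
    exact .inr (h₂.forall_snd_edge_mem_of_flux_lt hG₂ hA hC₂ hlt₂ hvis)
  exact .inl (heq₁.symm.trans heq₂)

end Subflow

lemma exists_optimal_of_separated [Fintype V] {c : V → V → ℝ} {bdry I J : Finset V}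
    {FIJ FI F₀ : List (CycleFlow V)} (hFIJ : Feasible c FIJ)
    (hIJ : mflux FIJ (I ∪ J) (bdry \ (I ∪ J)) = entropy c bdry (I ∪ J))
    (hFI : Feasible c FI) (hI : mflux FI I (bdry \ I) = entropy c bdry I)
    (h₀IJ : Subflow F₀ FIJ) (h₀I : Subflow F₀ FI)
    (hsep : ∀ a ∈ I, ∀ b ∈ bdry \ (I ∪ J), ¬ Relation.ReflTransGen
      (fun x y => 0 < resid c F₀ x y ∨ 0 < resid c F₀ y x) a b) :
    ∃ F : List (CycleFlow V), Feasible c F ∧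
      mflux F I (bdry \ I) = entropy c bdry I ∧
      mflux F (I ∪ J) (bdry \ (I ∪ J)) = entropy c bdry (I ∪ J) := by
  set A := Finset.univ.filter fun v => ∃ a ∈ I,
    Relation.ReflTransGen (fun x y => 0 < resid c F₀ x y ∨ 0 < resid c F₀ y x) a v
  have hIA : I ⊆ A := fun a ha => Finset.mem_filter.2 ⟨Finset.mem_univ _, a, ha, .refl⟩
  have hA : ∀ x y, x ∈ A → 0 < resid c F₀ x y → y ∈ A := fun x y hx hxy => by
    obtain ⟨a, ha, hax⟩ := (Finset.mem_filter.1 hx).2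
    exact Finset.mem_filter.2 ⟨Finset.mem_univ _, a, ha, hax.tail (.inl hxy)⟩
  have hKA : Disjoint (bdry \ (I ∪ J)) A := Finset.disjoint_left.2 fun b hb hbA => by
    obtain ⟨a, ha, hab⟩ := (Finset.mem_filter.1 hbA).2
    exact hsep a ha b hb hab
  have hL := spliceable_of_subflow hA h₀I h₀IJ hFI hFIJ
  have hfst : (FI.zip FIJ).map Prod.fst = FI :=
    List.map_fst_zip (h₀I.length_eq ▸ h₀IJ.length_eq).le
  have hsnd : (FI.zip FIJ).map Prod.snd = FIJ :=
    List.map_snd_zip (h₀I.length_eq ▸ h₀IJ.length_eq).ge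
  refine ⟨(FI.zip FIJ).map (splice A),
    feasible_map_splice hL (by rwa [hfst]) (by rwa [hsnd]), ?_, ?_⟩
  · rw [mflux_map_splice_of_subset hL hIA, hfst, hI]
  · rw [mflux_map_splice_of_disjoint hL hKA, hsnd, hIJ]

end

theorem stmt4_general {V : Type*} [Fintype V] [DecidableEq V] (c : V → V → ℝ)
    (hbal : BalancedNet c)
    (bdry I J : Finset V) :
    (∃ F : List (CycleFlow V), Feasible c F ∧
        mflux F I (bdry \ I) = entropy c bdry I ∧
        mflux F (I ∪ J) (bdry \ (I ∪ J)) = entropy c bdry (I ∪ J)) ↔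
      (∃ FIJ FI F0 : List (CycleFlow V),
        Feasible c FIJ ∧
        mflux FIJ (I ∪ J) (bdry \ (I ∪ J)) = entropy c bdry (I ∪ J) ∧
        Feasible c FI ∧
        mflux FI I (bdry \ I) = entropy c bdry I ∧
        Feasible c F0 ∧ Subflow F0 FIJ ∧ Subflow F0 FI ∧
        ∀ a ∈ I, ∀ b ∈ bdry \ (I ∪ J),
          ¬ Relation.ReflTransGen
              (fun x y => 0 < resid c F0 x y ∨ 0 < resid c F0 y x) a b) := by
  -- `\` in the statement uses this instance, but `entropy` was defined with the classical one
  obtain rfl : ‹DecidableEq V› = fun a b => Classical.propDecidable (a = b) :=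
    Subsingleton.elim _ _
  constructor
  · rintro ⟨F, hF, hI, hIJ⟩
    obtain ⟨G, hG, hsat⟩ := exists_feasible_append_resid_eq_zero hbal hF
    have hrefl : Subflow (F ++ G) (F ++ G) := List.forall₂_same.2 fun _ _ => ⟨rfl, le_rfl⟩
    refine ⟨F ++ G, F ++ G, F ++ G, hG, mflux_append_eq_entropy hG hIJ, hG,
      mflux_append_eq_entropy hG hI, hG, hrefl, hrefl, fun a ha b hb hab => ?_⟩
    rw [Relation.reflTransGen_iff_eq (by simp [hsat])] at hab
    exact (Finset.mem_sdiff.1 hb).2 (Finset.mem_union_left _ (hab ▸ ha))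
  · rintro ⟨FIJ, FI, F0, hFIJ, hIJ, hFI, hI, -, h0IJ, h0I, hsep⟩
    exact exists_optimal_of_separated hFIJ hIJ hFI hI h0IJ h0I hsep

/-- Characterization of the existence of a nested multi-cycle flow simultaneously
maximizing the flux through `I` and through `I ∪ J`. -/
theorem stmt4 {V : Type*} [Fintype V] [DecidableEq V] (c : V → V → ℝ)
    (hc : ∀ u v, 0 ≤ c u v) (hbal : BalancedNet c)
    (bdry I J : Finset V) (hI : I ⊆ bdry) (hJ : J ⊆ bdry) (hIJ : Disjoint I J) :
    (∃ F : List (CycleFlow V), Feasible c F ∧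
        mflux F I (bdry \ I) = entropy c bdry I ∧
        mflux F (I ∪ J) (bdry \ (I ∪ J)) = entropy c bdry (I ∪ J)) ↔
      (∃ FIJ FI F0 : List (CycleFlow V),
        Feasible c FIJ ∧
        mflux FIJ (I ∪ J) (bdry \ (I ∪ J)) = entropy c bdry (I ∪ J) ∧
        Feasible c FI ∧
        mflux FI I (bdry \ I) = entropy c bdry I ∧
        Feasible c F0 ∧ Subflow F0 FIJ ∧ Subflow F0 FI ∧
        ∀ a ∈ I, ∀ b ∈ bdry \ (I ∪ J),
          ¬ Relation.ReflTransGen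
              (fun x y => 0 < resid c F0 x y ∨ 0 < resid c F0 y x) a b) :=
  stmt4_general c hbal bdry I J
end

section
/- Let N = (V, E, c) be a balanced directed network (not assumed to satisfy nesting) with boundary vertices ∂V ⊆ V, and let I, J ⊆ ∂V be disjoint. Then the cycle-flow entropy satisfies subadditivity: S(I) + S(J) ≥ S(I ∪ J). -/
open scoped Classical

lemma ite_flux_nonneg {V : Type*} (C : CycleFlow V) (P : Prop) [Decidable P] :
    (0 : ℝ) ≤ if P then C.flux else 0 := by
  split
  · exact C.flux_nonneg
  · exact le_rfl

lemma cycle_term_le {V : Type*} [Fintype V] (C : CycleFlow V) (K L : Finset V) :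
    (if C.cyc.Visits K ∧ C.cyc.Visits L then C.flux else 0) ≤
    ∑ u, ∑ v, (if C.cyc.Mem (u, v) then C.flux else 0) := by
  split_ifs with h
  · obtain ⟨⟨i, hi⟩, -⟩ := h
    set e := C.cyc.edge i with he
    have hmem : C.cyc.Mem (e.1, e.2) := ⟨i, by simp [he]⟩
    calc C.flux = (if C.cyc.Mem (e.1, e.2) then C.flux else 0) := by simp [hmem]
      _ ≤ ∑ v, (if C.cyc.Mem (e.1, v) then C.flux else 0) :=
          Finset.single_le_sum (f := fun v => if C.cyc.Mem (e.1, v) then C.flux else 0)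
            (fun v _ => ite_flux_nonneg C _) (Finset.mem_univ e.2)
      _ ≤ ∑ u, ∑ v, (if C.cyc.Mem (u, v) then C.flux else 0) :=
          Finset.single_le_sum (f := fun u => ∑ v, if C.cyc.Mem (u, v) then C.flux else 0)
            (fun u _ => Finset.sum_nonneg fun v _ => ite_flux_nonneg C _)
            (Finset.mem_univ e.1)
  · exact Finset.sum_nonneg fun u _ => Finset.sum_nonneg fun v _ => ite_flux_nonneg C _

lemma mflux_le_sum_load {V : Type*} [Fintype V] (F : List (CycleFlow V)) (K L : Finset V) :
    mflux F K L ≤ ∑ u, ∑ v, edgeLoad F u v := by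
  induction F with
  | nil => simp [mflux, edgeLoad]
  | cons C F ih =>
    have h1 : mflux (C :: F) K L =
        (if C.cyc.Visits K ∧ C.cyc.Visits L then C.flux else 0) + mflux F K L := by
      simp [mflux]
    have h2 : ∀ u v, edgeLoad (C :: F) u v =
        (if C.cyc.Mem (u, v) then C.flux else 0) + edgeLoad F u v := fun u v => by
      simp [edgeLoad]
    rw [h1]
    simp_rw [h2, Finset.sum_add_distrib]
    exact add_le_add (cycle_term_le C K L) ih

lemma mflux_le_cap {V : Type*} [Fintype V] {c : V → V → ℝ} {F : List (CycleFlow V)}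
    (hF : Feasible c F) (K L : Finset V) : mflux F K L ≤ ∑ u, ∑ v, c u v :=
  (mflux_le_sum_load F K L).trans
    (Finset.sum_le_sum fun u _ => Finset.sum_le_sum fun v _ => hF u v)

lemma entropySet_bddAbove {V : Type*} [Fintype V] [DecidableEq V] (c : V → V → ℝ) (bdry K : Finset V) :
    BddAbove { x | ∃ F : List (CycleFlow V), Feasible c F ∧ mflux F K (bdry \ K) = x } := by
  refine ⟨∑ u, ∑ v, c u v, ?_⟩
  rintro x ⟨F, hF, rfl⟩
  exact mflux_le_cap hF _ _

lemma feasible_nil {V : Type*} {c : V → V → ℝ} (hc : ∀ u v, 0 ≤ c u v) :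
    Feasible c ([] : List (CycleFlow V)) := by
  intro u v
  simpa [edgeLoad] using hc u v

lemma mflux_union_le {V : Type*} [DecidableEq V] (F : List (CycleFlow V))
    (bdry I J : Finset V) :
    mflux F (I ∪ J) (bdry \ (I ∪ J)) ≤ mflux F I (bdry \ I) + mflux F J (bdry \ J) := by
  induction F with
  | nil => simp [mflux]
  | cons C F ih =>
    have h1 : ∀ K L : Finset V, mflux (C :: F) K L =
        (if C.cyc.Visits K ∧ C.cyc.Visits L then C.flux else 0) + mflux F K L := fun K L => by
      simp [mflux]
    rw [h1, h1, h1]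
    have key : (if C.cyc.Visits (I ∪ J) ∧ C.cyc.Visits (bdry \ (I ∪ J)) then C.flux else 0) ≤
        (if C.cyc.Visits I ∧ C.cyc.Visits (bdry \ I) then C.flux else 0) +
        (if C.cyc.Visits J ∧ C.cyc.Visits (bdry \ J) then C.flux else 0) := by
      by_cases h : C.cyc.Visits (I ∪ J) ∧ C.cyc.Visits (bdry \ (I ∪ J))
      · obtain ⟨⟨i, hi⟩, ⟨j, hj⟩⟩ := h
        rw [Finset.mem_union] at hi
        rw [Finset.mem_sdiff, Finset.mem_union] at hj
        rw [if_pos ⟨⟨i, by rw [Finset.mem_union]; exact hi⟩,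
          ⟨j, by rw [Finset.mem_sdiff, Finset.mem_union]; exact hj⟩⟩]
        cases hi with
        | inl hIi =>
          have hA : C.cyc.Visits I ∧ C.cyc.Visits (bdry \ I) :=
            ⟨⟨i, hIi⟩, ⟨j, by rw [Finset.mem_sdiff]; exact ⟨hj.1, fun hx => hj.2 (Or.inl hx)⟩⟩⟩
          rw [if_pos hA]
          have := ite_flux_nonneg C (C.cyc.Visits J ∧ C.cyc.Visits (bdry \ J))
          linarith
        | inr hJi =>
          have hA : C.cyc.Visits J ∧ C.cyc.Visits (bdry \ J) :=
            ⟨⟨i, hJi⟩, ⟨j, by rw [Finset.mem_sdiff]; exact ⟨hj.1, fun hx => hj.2 (Or.inr hx)⟩⟩⟩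
          rw [if_pos hA]
          have := ite_flux_nonneg C (C.cyc.Visits I ∧ C.cyc.Visits (bdry \ I))
          linarith
      · rw [if_neg h]
        have h1 := ite_flux_nonneg C (C.cyc.Visits I ∧ C.cyc.Visits (bdry \ I))
        have h2 := ite_flux_nonneg C (C.cyc.Visits J ∧ C.cyc.Visits (bdry \ J))
        linarith
    linarith

/-- Subadditivity of the cycle-flow entropy on any balanced network. -/
theorem stmt8 {V : Type*} [Fintype V] [DecidableEq V] (c : V → V → ℝ)
    (hc : ∀ u v, 0 ≤ c u v) (bdry : Finset V) (hbal : BalancedNet c)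
    (I J : Finset V) (hI : I ⊆ bdry) (hJ : J ⊆ bdry) (hIJ : Disjoint I J) :
    entropy c bdry (I ∪ J) ≤ entropy c bdry I + entropy c bdry J := by
  have hinst : (fun a b => Classical.propDecidable (a = b)) = ‹DecidableEq V› :=
    Subsingleton.elim _ _
  unfold entropy
  rw [hinst]
  refine csSup_le ⟨0, [], feasible_nil hc, by simp [mflux]⟩ ?_
  rintro x ⟨F, hF, rfl⟩
  have h1 : mflux F I (bdry \ I) ≤
      sSup { x | ∃ F : List (CycleFlow V), Feasible c F ∧ mflux F I (bdry \ I) = x } :=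
    le_csSup (entropySet_bddAbove c bdry I) ⟨F, hF, rfl⟩
  have h2 : mflux F J (bdry \ J) ≤
      sSup { x | ∃ F : List (CycleFlow V), Feasible c F ∧ mflux F J (bdry \ J) = x } :=
    le_csSup (entropySet_bddAbove c bdry J) ⟨F, hF, rfl⟩
  have h3 := mflux_union_le F bdry I J
  linarith
end

section
/- Let N = (V, E, c) be a directed network with boundary vertices ∂V ⊆ V and let I, J ⊆ ∂V be disjoint. Then every edge cycle that visits a vertex of I ∪ J and a vertex of ∂V ∖ (I ∪ J) also visits a vertex of I and a vertex of ∂V ∖ I, or visits a vertex of J and a vertex of ∂V ∖ J. Consequently, for every multi-cycle flow ℭ on N, f_ℭ(I ∪ J, (I ∪ J)^c) ≤ f_ℭ(I, I^c) + f_ℭ(J, J^c). -/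
open scoped Classical

/-- Every edge cycle visiting `I ∪ J` and its boundary complement visits `I` and
`∂V ∖ I`, or visits `J` and `∂V ∖ J`; consequently the flux through `I ∪ J` is at
most the sum of the fluxes through `I` and through `J`. -/
theorem stmt10 {V : Type*} [DecidableEq V] (c : V → V → ℝ) (hc : ∀ u v, 0 ≤ c u v)
    (bdry I J : Finset V) (hI : I ⊆ bdry) (hJ : J ⊆ bdry) (hIJ : Disjoint I J) :
    (∀ cyc : EdgeCycle V, cyc.Visits (I ∪ J) → cyc.Visits (bdry \ (I ∪ J)) →
        (cyc.Visits I ∧ cyc.Visits (bdry \ I)) ∨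
        (cyc.Visits J ∧ cyc.Visits (bdry \ J))) ∧
      ∀ F : List (CycleFlow V), Feasible c F →
        mflux F (I ∪ J) (bdry \ (I ∪ J)) ≤
          mflux F I (bdry \ I) + mflux F J (bdry \ J) := by
  have key : ∀ cyc : EdgeCycle V, cyc.Visits (I ∪ J) → cyc.Visits (bdry \ (I ∪ J)) →
      (cyc.Visits I ∧ cyc.Visits (bdry \ I)) ∨
      (cyc.Visits J ∧ cyc.Visits (bdry \ J)) := by
    intro cyc ⟨i, hi⟩ ⟨j, hj⟩
    rw [Finset.mem_union] at hi
    rw [Finset.mem_sdiff, Finset.mem_union] at hj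
    rcases hi with h | h
    · exact Or.inl ⟨⟨i, h⟩, ⟨j, Finset.mem_sdiff.2 ⟨hj.1, fun hc => hj.2 (Or.inl hc)⟩⟩⟩
    · exact Or.inr ⟨⟨i, h⟩, ⟨j, Finset.mem_sdiff.2 ⟨hj.1, fun hc => hj.2 (Or.inr hc)⟩⟩⟩
  refine ⟨key, fun F hF => ?_⟩
  clear hF hIJ hI hJ hc
  induction F with
  | nil => simp [mflux]
  | cons C F ih =>
    simp only [mflux, List.map_cons, List.sum_cons] at *
    have h1 : (if C.cyc.Visits (I ∪ J) ∧ C.cyc.Visits (bdry \ (I ∪ J)) then C.flux else 0) ≤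
        (if C.cyc.Visits I ∧ C.cyc.Visits (bdry \ I) then C.flux else 0) +
        (if C.cyc.Visits J ∧ C.cyc.Visits (bdry \ J) then C.flux else 0) := by
      have hf := C.flux_nonneg
      by_cases h : C.cyc.Visits (I ∪ J) ∧ C.cyc.Visits (bdry \ (I ∪ J))
      · rcases key _ h.1 h.2 with h' | h'
        · rw [if_pos h, if_pos h']; split_ifs <;> linarith
        · rw [if_pos h, if_pos h']; split_ifs <;> linarith
      · rw [if_neg h]; split_ifs <;> linarith
    linarith
end

section
/- Let n ≥ 2 and let N be the directed n-cycle network: vertices V = {1, …, n}, edges i → i+1 (indices mod n) each of capacity 1, with every vertex a boundary vertex (∂V = V). Then for every subset I with ∅ ≠ I ⊊ V, the cycle-flow entropy satisfies S(I) = 1. (This realizes the entropy vector of the n-party GHZ state.) -/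
open scoped Classical

/-- The directed `n`-cycle network: an edge `i → i + 1 (mod n)` of capacity `1`
for each vertex `i`. -/
noncomputable def cycleCap (n : ℕ) : Fin n → Fin n → ℝ :=
  fun i j => if j.val = (i.val + 1) % n then 1 else 0


/-! A cycle flow of positive flux on the directed `n`-cycle can only use the edges `i → i + 1`,
and a cycle made of such edges must run once around the whole network. So every cycle flow
visits every vertex, and every one of them loads the single edge `0 → 1` of capacity `1`: the
flux between `I` and its complement is at most `1`, and the flow once around the cycle with
flux `1` attains it. -/

theorem cycleCap_apply {n : ℕ} [NeZero n] (i j : Fin n) :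
    cycleCap n i j = if j = i + 1 then 1 else 0 := by
  simp only [cycleCap, Fin.ext_iff, Fin.val_add, Fin.val_one', Nat.add_mod_mod]

namespace EdgeCycle

section Successor

variable {n : ℕ} [NeZero n] (C : EdgeCycle (Fin n)) (hC : ∀ i, (C.edge i).2 = (C.edge i).1 + 1)
include hC

open Fin.NatCast in
/-- The sources of the edges are closed under `· + 1`, so they exhaust `Fin n`. -/
theorem exists_fst_eq (w : Fin n) : ∃ i, (C.edge i).1 = w := by
  set s := (C.edge ⟨0, C.npos⟩).1
  have hsucc : ∀ m : ℕ, ∃ i, (C.edge i).1 = s + (m : Fin n) := by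
    intro m
    induction m with
    | zero => exact ⟨⟨0, C.npos⟩, by simp [s]⟩
    | succ m ih =>
      obtain ⟨i, hi⟩ := ih
      refine ⟨_, (C.chain i).symm.trans ?_⟩
      rw [hC, hi, Nat.cast_succ, add_assoc]
  obtain ⟨i, hi⟩ := hsucc (w - s).val
  exact ⟨i, by rw [hi, Fin.cast_val_eq_self, add_sub_cancel]⟩

theorem mem_succ (w : Fin n) : C.Mem (w, w + 1) := by
  obtain ⟨i, hi⟩ := C.exists_fst_eq hC w
  exact ⟨i, Prod.ext hi (by rw [hC, hi])⟩

theorem visits_of_nonempty {S : Finset (Fin n)} (hS : S.Nonempty) : C.Visits S := by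
  obtain ⟨s, hs⟩ := hS
  obtain ⟨i, hi⟩ := C.exists_fst_eq hC (s - 1)
  exact ⟨i, by rwa [hC, hi, sub_add_cancel]⟩

end Successor

def around (n : ℕ) [NeZero n] : EdgeCycle (Fin n) where
  n := n
  npos := Nat.pos_of_neZero n
  edge i := (i, i + 1)
  inj _ _ h := (Prod.ext_iff.mp h).1
  chain i := by
    ext
    simp only [Fin.val_add, Fin.val_one', Nat.add_mod_mod]

theorem mem_around_iff {n : ℕ} [NeZero n] (u v : Fin n) :
    (around n).Mem (u, v) ↔ v = u + 1 := by
  constructor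
  · rintro ⟨i, hi⟩
    obtain ⟨rfl, rfl⟩ := Prod.ext_iff.mp hi
    rfl
  · rintro rfl
    exact ⟨u, rfl⟩

end EdgeCycle

section Flux

variable {V : Type*}

theorem flux_le_edgeLoad {F : List (CycleFlow V)} {C : CycleFlow V} (hC : C ∈ F) {u v : V}
    (huv : C.cyc.Mem (u, v)) : C.flux ≤ edgeLoad F u v := by
  have hterm : (if C.cyc.Mem (u, v) then C.flux else 0) = C.flux := if_pos huv
  rw [← hterm]
  refine List.single_le_sum ?_ _ (List.mem_map_of_mem hC)
  simp only [List.mem_map]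
  rintro _ ⟨D, -, rfl⟩
  split_ifs
  exacts [D.flux_nonneg, le_rfl]

theorem mflux_le_edgeLoad {F : List (CycleFlow V)} {u v : V}
    (hF : ∀ C ∈ F, 0 < C.flux → C.cyc.Mem (u, v)) (I J : Finset V) :
    mflux F I J ≤ edgeLoad F u v := by
  refine List.sum_le_sum fun C hC => ?_
  by_cases huv : C.cyc.Mem (u, v)
  · rw [if_pos huv]
    split_ifs
    exacts [le_rfl, C.flux_nonneg]
  · have hzero : C.flux = 0 :=
      le_antisymm (not_lt.mp fun hpos => huv (hF C hC hpos)) C.flux_nonneg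
    simp [hzero]

theorem mflux_singleton {C : CycleFlow V} {I J : Finset V} (hI : C.cyc.Visits I)
    (hJ : C.cyc.Visits J) : mflux [C] I J = C.flux := by
  simp [mflux, hI, hJ]

end Flux

section CycleNetwork

variable {n : ℕ} [NeZero n]

theorem edge_succ_of_feasible {F : List (CycleFlow (Fin n))} (hF : Feasible (cycleCap n) F)
    {C : CycleFlow (Fin n)} (hC : C ∈ F) (hpos : 0 < C.flux) (i : Fin C.cyc.n) :
    (C.cyc.edge i).2 = (C.cyc.edge i).1 + 1 := by
  by_contra hne
  have hload := (flux_le_edgeLoad hC ⟨i, rfl⟩).trans (hF _ _)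
  rw [cycleCap_apply, if_neg hne] at hload
  exact hload.not_gt hpos

theorem mflux_le_one_of_feasible {F : List (CycleFlow (Fin n))} (hF : Feasible (cycleCap n) F)
    (I J : Finset (Fin n)) : mflux F I J ≤ 1 := by
  have hthrough : ∀ C ∈ F, 0 < C.flux → C.cyc.Mem (0, 0 + 1) := fun C hC hpos =>
    C.cyc.mem_succ (edge_succ_of_feasible hF hC hpos) 0
  calc mflux F I J ≤ edgeLoad F 0 (0 + 1) := mflux_le_edgeLoad hthrough I J
    _ ≤ cycleCap n 0 (0 + 1) := hF _ _
    _ = 1 := by rw [cycleCap_apply, if_pos rfl]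

def aroundFlow (n : ℕ) [NeZero n] : CycleFlow (Fin n) :=
  ⟨EdgeCycle.around n, 1, zero_le_one⟩

theorem feasible_aroundFlow : Feasible (cycleCap n) [aroundFlow n] := by
  intro u v
  simp [edgeLoad, aroundFlow, EdgeCycle.mem_around_iff, cycleCap_apply]

theorem mflux_aroundFlow {I J : Finset (Fin n)} (hI : I.Nonempty) (hJ : J.Nonempty) :
    mflux [aroundFlow n] I J = 1 :=
  have hsucc : ∀ i, ((aroundFlow n).cyc.edge i).2 = ((aroundFlow n).cyc.edge i).1 + 1 :=
    fun _ => rfl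
  mflux_singleton (EdgeCycle.visits_of_nonempty _ hsucc hI)
    (EdgeCycle.visits_of_nonempty _ hsucc hJ)

end CycleNetwork

theorem stmt12_general (n : ℕ) (I : Finset (Fin n)) (hne : I.Nonempty)
    (hproper : I ≠ Finset.univ) :
    entropy (cycleCap n) Finset.univ I = 1 := by
  have : NeZero n := NeZero.of_pos hne.choose.pos
  refine IsGreatest.csSup_eq ⟨⟨[aroundFlow n], feasible_aroundFlow, mflux_aroundFlow hne ?_⟩, ?_⟩
  · obtain ⟨x, hx⟩ := not_forall.mp (mt Finset.eq_univ_iff_forall.mpr hproper)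
    -- the complement inside `entropy` is taken with the classical `DecidableEq` instance
    exact ⟨x, by convert Finset.mem_sdiff.mpr ⟨Finset.mem_univ x, hx⟩⟩
  · rintro x ⟨F, hF, rfl⟩
    exact mflux_le_one_of_feasible hF I _

/-- On the directed `n`-cycle network with all vertices boundary vertices, every
proper nonempty subset has cycle-flow entropy `1` (the `n`-party GHZ entropies). -/
theorem stmt12 (n : ℕ) (hn : 2 ≤ n) (I : Finset (Fin n)) (hne : I.Nonempty)
    (hproper : I ≠ Finset.univ) :
    entropy (cycleCap n) Finset.univ I = 1 :=
  stmt12_general n I hne hproper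
end

section
/- Consider the directed network with vertex set {A, B, C, O, x}, boundary vertices ∂V = {A, B, C, O}, and edges, each of capacity 1: A → O, O → C, A → C, C → A, C → x, x → O, O → B, B → x. This network is not balanced, and its cycle-flow entropies satisfy S({C}) = 2, S({A,C}) = 1, S({B,C}) = 2, S({A,B,C}) = 2; in particular strong subadditivity fails: S({A,C}) + S({B,C}) < S({C}) + S({A,B,C}). -/
open scoped Classical

/-- The unbalanced network of Figure 3: vertices `A = 0, B = 1, C = 2, O = 3, x = 4`
(with `x` internal), and edges of capacity `1`:
`A → O, O → C, A → C, C → A, C → x, x → O, O → B, B → x`. -/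
noncomputable def cap14 : Fin 5 → Fin 5 → ℝ := fun u v =>
  if (u, v) ∈ ([(0, 3), (3, 2), (0, 2), (2, 0), (2, 4), (4, 3), (3, 1), (1, 4)] :
      List (Fin 5 × Fin 5)) then 1 else 0


/-!
A cycle that visits both `I` and `J = ∂V ∖ I` enters each of them along some edge, so the flux
between `I` and `J` is bounded both by the capacity of the edges entering `I` and by that of the
edges entering `J`. For `I = {C}, {A,C}, {B,C}, {A,B,C}` the smaller of these two cuts has
capacity `2, 1, 2, 2` (only `O → C` enters `{A,C}`), and explicit edge-disjoint unit cycles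
attain these values. The network is unbalanced at `x`, which has two incoming edges and one
outgoing edge.
-/

namespace EdgeCycle

variable {V : Type*}

theorem exists_source_not_mem_target_mem (C : EdgeCycle V) {S : Set V} {i j : Fin C.n}
    (hi : (C.edge i).2 ∉ S) (hj : (C.edge j).2 ∈ S) :
    ∃ k, (C.edge k).1 ∉ S ∧ (C.edge k).2 ∈ S := by
  by_contra! hclosed
  have hout : ∀ m : ℕ, (C.edge ⟨(i + m) % C.n, Nat.mod_lt _ C.npos⟩).2 ∉ S := by
    intro m
    induction m with
    | zero => simpa [Nat.mod_eq_of_lt i.isLt] using hi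
    | succ m ih =>
      refine hclosed _ ?_
      rw [C.chain] at ih
      convert ih using 4
      simp [add_assoc]
  refine hout (j + C.n - i) ?_
  convert hj
  rw [show i.val + (j.val + C.n - i.val) = j.val + C.n by omega, Nat.add_mod_right,
    Nat.mod_eq_of_lt j.isLt]

end EdgeCycle

section CycleFlows

variable {V : Type*}

theorem sum_edgeLoad (F : List (CycleFlow V)) (T : Finset (V × V)) :
    ∑ e ∈ T, edgeLoad F e.1 e.2 =
      (F.map fun C => ∑ e ∈ T, if C.cyc.Mem e then C.flux else 0).sum := by
  induction F with
  | nil => simp [edgeLoad]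
  | cons C F ih => simp [edgeLoad, Finset.sum_add_distrib, ← ih]

theorem mflux_le_sum_edgeLoad_s14 (F : List (CycleFlow V)) (I J : Finset V) (T : Finset (V × V))
    (hT : ∀ C ∈ F, C.cyc.Visits I → C.cyc.Visits J → ∃ e ∈ T, C.cyc.Mem e) :
    mflux F I J ≤ ∑ e ∈ T, edgeLoad F e.1 e.2 := by
  rw [sum_edgeLoad, mflux]
  refine List.sum_le_sum fun C hC => ?_
  have hload_nonneg : ∀ e ∈ T, 0 ≤ if C.cyc.Mem e then C.flux else 0 := fun e _ => by
    split_ifs <;> simp [C.flux_nonneg]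
  split_ifs with hvisits
  · obtain ⟨e, heT, heC⟩ := hT C hC hvisits.1 hvisits.2
    simpa [heC] using Finset.single_le_sum hload_nonneg heT
  · exact Finset.sum_nonneg hload_nonneg

theorem mflux_comm (F : List (CycleFlow V)) (I J : Finset V) : mflux F I J = mflux F J I := by
  simp only [mflux, and_comm]

variable [Fintype V] [DecidableEq V]

noncomputable def inCutCapacity (c : V → V → ℝ) (J : Finset V) : ℝ :=
  ∑ e ∈ Finset.univ.filter (fun e : V × V => e.1 ∉ J ∧ e.2 ∈ J), c e.1 e.2

theorem mflux_le_inCutCapacity {c : V → V → ℝ} {F : List (CycleFlow V)} (hF : Feasible c F)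
    {I J : Finset V} (hIJ : Disjoint I J) : mflux F I J ≤ inCutCapacity c J := by
  refine (mflux_le_sum_edgeLoad_s14 F I J _ fun C _ hI hJ => ?_).trans
    (Finset.sum_le_sum fun e _ => hF e.1 e.2)
  obtain ⟨i, hi⟩ := hI
  obtain ⟨j, hj⟩ := hJ
  obtain ⟨k, hk⟩ := C.cyc.exists_source_not_mem_target_mem (S := (J : Set V))
    (Finset.disjoint_left.1 hIJ hi) hj
  exact ⟨C.cyc.edge k, by simpa using hk, k, rfl⟩

theorem mflux_le_min_inCutCapacity {c : V → V → ℝ} {F : List (CycleFlow V)}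
    (hF : Feasible c F) {I J : Finset V} (hIJ : Disjoint I J) :
    mflux F I J ≤ min (inCutCapacity c I) (inCutCapacity c J) :=
  le_min (mflux_comm F I J ▸ mflux_le_inCutCapacity hF hIJ.symm) (mflux_le_inCutCapacity hF hIJ)

theorem entropy_eq_of_mflux_eq_of_inCutCapacity_le {c : V → V → ℝ} {bdry I : Finset V}
    {x : ℝ} {F : List (CycleFlow V)} (hF : Feasible c F) (hflux : mflux F I (bdry \ I) = x)
    (hcut : min (inCutCapacity c I) (inCutCapacity c (bdry \ I)) ≤ x) :
    entropy c bdry I = x := by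
  -- `entropy` takes `bdry \ I` with classical decidable equality; `convert` bridges the instances.
  refine IsGreatest.csSup_eq ⟨⟨F, hF, by convert hflux⟩, ?_⟩
  rintro _ ⟨G, hG, rfl⟩
  convert (mflux_le_min_inCutCapacity hG Finset.disjoint_sdiff).trans hcut

end CycleFlows

def CycleFlow.unit {V : Type*} (C : EdgeCycle V) : CycleFlow V := ⟨C, 1, zero_le_one⟩

def cycleAOC : EdgeCycle (Fin 5) :=
  ⟨3, by norm_num, ![(0, 3), (3, 2), (2, 0)], by decide, by decide⟩

def cycleAC : EdgeCycle (Fin 5) :=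
  ⟨2, by norm_num, ![(0, 2), (2, 0)], by decide, by decide⟩

def cycleCxO : EdgeCycle (Fin 5) :=
  ⟨3, by norm_num, ![(2, 4), (4, 3), (3, 2)], by decide, by decide⟩

def cycleOBx : EdgeCycle (Fin 5) :=
  ⟨3, by norm_num, ![(3, 1), (1, 4), (4, 3)], by decide, by decide⟩

theorem entropy_cap14_C : entropy cap14 {0, 1, 2, 3} {2} = 2 := by
  refine entropy_eq_of_mflux_eq_of_inCutCapacity_le
    (F := [.unit cycleAC, .unit cycleCxO]) ?_ ?_ ?_
  · intro u v
    fin_cases u <;> fin_cases v <;>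
      simp [edgeLoad, CycleFlow.unit, EdgeCycle.Mem, cycleAC, cycleCxO, Fin.exists_fin_succ, cap14]
  · simp +decide [mflux, CycleFlow.unit, EdgeCycle.Visits, cycleAC, cycleCxO, one_add_one_eq_two]
  · simp only [inCutCapacity, cap14, Finset.sum_boole]
    norm_cast

theorem entropy_cap14_AC : entropy cap14 {0, 1, 2, 3} {0, 2} = 1 := by
  refine entropy_eq_of_mflux_eq_of_inCutCapacity_le
    (F := [.unit cycleAOC]) ?_ ?_ ?_
  · intro u v
    fin_cases u <;> fin_cases v <;>
      simp [edgeLoad, CycleFlow.unit, EdgeCycle.Mem, cycleAOC, Fin.exists_fin_succ, cap14]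
  · simp +decide [mflux, CycleFlow.unit, EdgeCycle.Visits, cycleAOC]
  · simp only [inCutCapacity, cap14, Finset.sum_boole]
    norm_cast

theorem entropy_cap14_BC : entropy cap14 {0, 1, 2, 3} {1, 2} = 2 := by
  refine entropy_eq_of_mflux_eq_of_inCutCapacity_le
    (F := [.unit cycleAC, .unit cycleOBx]) ?_ ?_ ?_
  · intro u v
    fin_cases u <;> fin_cases v <;>
      simp [edgeLoad, CycleFlow.unit, EdgeCycle.Mem, cycleAC, cycleOBx, Fin.exists_fin_succ, cap14]
  · simp +decide [mflux, CycleFlow.unit, EdgeCycle.Visits, cycleAC, cycleOBx, one_add_one_eq_two]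
  · simp only [inCutCapacity, cap14, Finset.sum_boole]
    norm_cast

theorem entropy_cap14_ABC : entropy cap14 {0, 1, 2, 3} {0, 1, 2} = 2 := by
  refine entropy_eq_of_mflux_eq_of_inCutCapacity_le
    (F := [.unit cycleAOC, .unit cycleOBx]) ?_ ?_ ?_
  · intro u v
    fin_cases u <;> fin_cases v <;>
      simp [edgeLoad, CycleFlow.unit, EdgeCycle.Mem, cycleAOC, cycleOBx, Fin.exists_fin_succ, cap14]
  · simp +decide [mflux, CycleFlow.unit, EdgeCycle.Visits, cycleAOC, cycleOBx, one_add_one_eq_two]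
  · simp only [inCutCapacity, cap14, Finset.sum_boole]
    norm_cast

theorem not_balancedNet_cap14 : ¬ BalancedNet cap14 := by
  intro h
  have hx := h 4
  simp only [cap14, Finset.sum_boole, Nat.cast_inj] at hx
  exact absurd hx (by decide)

/-- This network is unbalanced, its entropies are
`S(C) = 2, S(AC) = 1, S(BC) = 2, S(ABC) = 2`, and strong subadditivity fails. -/
theorem stmt14 :
    ¬ BalancedNet cap14 ∧
    entropy cap14 ({0, 1, 2, 3} : Finset (Fin 5)) ({2} : Finset (Fin 5)) = 2 ∧
    entropy cap14 ({0, 1, 2, 3} : Finset (Fin 5)) ({0, 2} : Finset (Fin 5)) = 1 ∧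
    entropy cap14 ({0, 1, 2, 3} : Finset (Fin 5)) ({1, 2} : Finset (Fin 5)) = 2 ∧
    entropy cap14 ({0, 1, 2, 3} : Finset (Fin 5)) ({0, 1, 2} : Finset (Fin 5)) = 2 ∧
    entropy cap14 ({0, 1, 2, 3} : Finset (Fin 5)) ({0, 2} : Finset (Fin 5)) +
        entropy cap14 ({0, 1, 2, 3} : Finset (Fin 5)) ({1, 2} : Finset (Fin 5)) <
      entropy cap14 ({0, 1, 2, 3} : Finset (Fin 5)) ({2} : Finset (Fin 5)) +
        entropy cap14 ({0, 1, 2, 3} : Finset (Fin 5)) ({0, 1, 2} : Finset (Fin 5)) := by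
  refine ⟨not_balancedNet_cap14, entropy_cap14_C, entropy_cap14_AC, entropy_cap14_BC,
    entropy_cap14_ABC, ?_⟩
  rw [entropy_cap14_C, entropy_cap14_AC, entropy_cap14_BC, entropy_cap14_ABC]
  norm_num
end
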